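/- Let R = k[t]/(t^{n+1}) and M an R-module. For each i ≥ 1, multiplication by t induces a short exact sequence 0 → (t^{i-1}·Ker t^i_M)/(t^i·Ker t^{i+1}_M) → t^{i-1}M/t^iM → t^iM/t^{i+1}M → 0. -/
import Mathlib


/-- The truncated polynomial ring `R_n = k[t]/(t^{n+1})`. -/
abbrev Rn (k : Type*) [CommRing k] (n : ℕ) : Type _ :=
  Polynomial k ⧸ Ideal.span {(Polynomial.X : Polynomial k) ^ (n + 1)}

/-- The class of `t` in `R_n`. -/
noncomputable def tn (k : Type*) [CommRing k] (n : ℕ) : Rn k n :=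
  Ideal.Quotient.mk _ Polynomial.X

theorem stmt1' {R M : Type*} [CommRing R] [AddCommGroup M] [Module R M]
    (f : Module.End R M) (j : ℕ) :
    (Submodule.map (f ^ j) (LinearMap.ker (f ^ (j+1))) ⊓ LinearMap.range (f ^ (j+1))
        = Submodule.map (f ^ (j+1) : Module.End R M) (LinearMap.ker (f ^ (j+2))))
    ∧ (LinearMap.range (f ^ j) ⊓ Submodule.comap f (LinearMap.range (f ^ (j+2)))
        = Submodule.map (f ^ j) (LinearMap.ker (f ^ (j+1))) ⊔ LinearMap.range (f ^ (j+1)))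
    ∧ (Submodule.map f (LinearMap.range (f ^ j))
        = LinearMap.range (f ^ (j+1) : Module.End R M)) := by
  have hstep : ∀ (m : ℕ) (x : M), (f ^ (m+1)) x = f ((f ^ m) x) := fun m x => by
    rw [pow_succ', Module.End.mul_apply]
  refine ⟨?_, ?_, ?_⟩
  · apply le_antisymm
    · rintro x ⟨⟨a, ha, rfl⟩, b, hb⟩
      refine ⟨b, ?_, hb⟩
      simp only [SetLike.mem_coe, LinearMap.mem_ker] at ha ⊢
      rw [hstep, hb, ← hstep, ha]
    · rintro x ⟨b, hb, rfl⟩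
      simp only [SetLike.mem_coe, LinearMap.mem_ker] at hb
      refine ⟨⟨f b, ?_, ?_⟩, b, rfl⟩
      · simp only [SetLike.mem_coe, LinearMap.mem_ker]; rw [← Module.End.mul_apply, ← pow_succ, hb]
      · rw [← Module.End.mul_apply, ← pow_succ]
  · apply le_antisymm
    · rintro x ⟨⟨a, rfl⟩, b, hb⟩
      rw [Submodule.mem_sup]
      refine ⟨(f ^ j) (a - f b), ⟨a - f b, ?_, rfl⟩, (f ^ (j+1)) b, ⟨b, rfl⟩, ?_⟩
      · simp only [SetLike.mem_coe, LinearMap.mem_ker]; rw [map_sub, ← Module.End.mul_apply, ← pow_succ,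
          show (j+1)+1 = j+2 from rfl, hb, ← hstep, sub_self]
      · rw [map_sub, ← Module.End.mul_apply, ← pow_succ, sub_add_cancel]
    · refine sup_le ?_ ?_
      · rintro x ⟨a, ha, rfl⟩
        simp only [SetLike.mem_coe, LinearMap.mem_ker] at ha
        exact ⟨⟨a, rfl⟩, ⟨0, by rw [map_zero, ← hstep, ha]⟩⟩
      · rintro x ⟨b, rfl⟩
        exact ⟨⟨f b, by rw [← Module.End.mul_apply, ← pow_succ]⟩,
          ⟨b, by rw [hstep (j+1)]⟩⟩
  · apply le_antisymm
    · rintro x ⟨y, ⟨a, rfl⟩, rfl⟩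
      exact ⟨a, hstep j a⟩
    · rintro x ⟨a, rfl⟩
      exact ⟨(f ^ j) a, ⟨a, rfl⟩, (hstep j a).symm⟩

/-- Let `R = k[t]/(t^{n+1})` and `M` an `R`-module.  For each `i ≥ 1`,
multiplication by `t` induces a short exact sequence
`0 → (t^{i-1}·Ker t^i)/(t^i·Ker t^{i+1}) → t^{i-1}M/t^iM → t^iM/t^{i+1}M → 0`,
where the first map is induced by the inclusion `t^{i-1}Ker t^i ⊆ t^{i-1}M` and the second
by multiplication by `t`.  We express the exactness of this sequence of quotient modules
by the corresponding three identities of submodules of `M`: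
* injectivity on the left: `(t^{i-1}Ker t^i) ∩ t^iM = t^i Ker t^{i+1}`;
* exactness in the middle: `{x ∈ t^{i-1}M ∣ t·x ∈ t^{i+1}M} = t^{i-1}Ker t^i + t^iM`;
* surjectivity on the right: `t·(t^{i-1}M) = t^iM`. -/
theorem stmt1 (k : Type*) [CommRing k] (n : ℕ)
    (M : Type*) [AddCommGroup M] [Module (Rn k n) M]
    (f : Module.End (Rn k n) M) (hf : ∀ m : M, f m = tn k n • m) (i : ℕ) (hi : 1 ≤ i) :
    (Submodule.map (f ^ (i - 1)) (LinearMap.ker (f ^ i)) ⊓ LinearMap.range (f ^ i)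
        = Submodule.map (f ^ i : Module.End (Rn k n) M) (LinearMap.ker (f ^ (i + 1))))
    ∧ (LinearMap.range (f ^ (i - 1)) ⊓ Submodule.comap f (LinearMap.range (f ^ (i + 1)))
        = Submodule.map (f ^ (i - 1)) (LinearMap.ker (f ^ i)) ⊔ LinearMap.range (f ^ i))
    ∧ (Submodule.map f (LinearMap.range (f ^ (i - 1)))
        = LinearMap.range (f ^ i : Module.End (Rn k n) M)) := by
  obtain ⟨j, rfl⟩ : ∃ j, i = j + 1 := ⟨i - 1, (Nat.succ_pred_eq_of_pos hi).symm⟩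
  simpa using stmt1' f j
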